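/- For every nonnegative integer m, setting a = -1/2 - m (so 4a+1 = -1-4m and 4a = -2-4m), the terminating hypergeometric sum satisfies ∑_{n=0}^{4m+1} [(a)_n (4a+1)_n / ((4a)_n · n!)] · (4/3)^n = (-1)^m 2^{8m+1} (1/2)_m (5/2)_{3m} / (3^{4m+1} (3)_{4m}). -/

import Mathlib

/-!
Since `(c + 1)_n / (c)_n = (c + n) / c`, the series `₂F₁(a, c + 1; c; x)` is
`∑ (a)_n (1 + n / c) xⁿ / n!`. When `c (x - 1) = a x` its partial sums telescope:
`∑_{n ≤ N} (a)_n (c + n) xⁿ / n! = c (a + 1)_N x^N / N!`.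
Here `a = -1/2 - m`, `c = 4a` and `x = 4/3` satisfy this relation, so the terminating sum equals
`(1/2 - m)_{4m+1} (4/3)^{4m+1} / (4m+1)!`, and splitting the Pochhammer symbol at `m` and
reflecting `(1/2 - m)_m = (-1)^m (1/2)_m` gives the stated closed form.
-/

open Polynomial Finset Nat

section Pochhammer

variable {R : Type*} [CommSemiring R]

theorem ascPochhammer_eval_add (j k : ℕ) (x : R) :
    (ascPochhammer R (j + k)).eval x =
      (ascPochhammer R j).eval x * (ascPochhammer R k).eval (x + j) := by
  rw [← ascPochhammer_mul, eval_mul, eval_comp]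
  simp

theorem ascPochhammer_succ_eval_left (n : ℕ) (x : R) :
    (ascPochhammer R (n + 1)).eval x = x * (ascPochhammer R n).eval (x + 1) := by
  simp [ascPochhammer_succ_left, eval_comp]

theorem mul_ascPochhammer_eval_add_one (n : ℕ) (x : R) :
    x * (ascPochhammer R n).eval (x + 1) = (ascPochhammer R n).eval x * (x + n) := by
  rw [← ascPochhammer_succ_eval_left, ascPochhammer_succ_eval]

theorem ascPochhammer_eval_ne_zero {S : Type*} [CommRing S] [IsDomain S] {n : ℕ} {x : S}
    (hx : ∀ k < n, x + k ≠ 0) : (ascPochhammer S n).eval x ≠ 0 := by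
  rw [Ne, ascPochhammer_eval_eq_zero_iff]
  rintro ⟨k, hk, hkx⟩
  exact hx k hk (by rw [hkx, add_neg_cancel])

theorem ascPochhammer_eval_half_sub_self {K : Type*} [Field K] [CharZero K] (m : ℕ) :
    (ascPochhammer K m).eval (1 / 2 - m : K) = (-1) ^ m * (ascPochhammer K m).eval (1 / 2) := by
  rw [show (1 / 2 - m : K) = -(m - 1 / 2) by ring, ascPochhammer_eval_neg_eq_descPochhammer,
    descPochhammer_eval_eq_ascPochhammer]
  ring_nf

end Pochhammer

section Hypergeometric

variable {K : Type*} [Field K] [CharZero K]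

theorem sum_ascPochhammer_mul_add_pow_div_factorial {a c x : K} (h : c * (x - 1) = a * x)
    (N : ℕ) :
    ∑ n ∈ range (N + 1), (ascPochhammer K n).eval a * (c + n) * x ^ n / n ! =
      c * (ascPochhammer K N).eval (a + 1) * x ^ N / N ! := by
  induction N with
  | zero => simp
  | succ N ih =>
    have hN : (N ! : K) ≠ 0 := by exact_mod_cast N.factorial_ne_zero
    rw [sum_range_succ, ih, ascPochhammer_succ_eval_left, ascPochhammer_succ_eval,
      factorial_succ]
    push_cast
    field_simp
    linear_combination -(↑N + 1) * x ^ N * (ascPochhammer K N).eval (a + 1) * h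

theorem sum_hypergeometric_add_one_of_mul_sub_one_eq {a c x : K} (h : c * (x - 1) = a * x) (N : ℕ)
    (hc : ∀ n ≤ N, c + n ≠ 0) :
    ∑ n ∈ range (N + 1),
        (ascPochhammer K n).eval a * (ascPochhammer K n).eval (c + 1) /
          ((ascPochhammer K n).eval c * (n ! : K)) * x ^ n =
      (ascPochhammer K N).eval (a + 1) * x ^ N / N ! := by
  have hc0 : c ≠ 0 := by simpa using hc 0 (Nat.zero_le N)
  rw [← mul_div_cancel_left₀ ((ascPochhammer K N).eval (a + 1) * x ^ N / N !) hc0,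
    mul_div_assoc', ← mul_assoc, ← sum_ascPochhammer_mul_add_pow_div_factorial h, sum_div]
  refine sum_congr rfl fun n hn ↦ ?_
  have hcn : (ascPochhammer K n).eval c ≠ 0 :=
    ascPochhammer_eval_ne_zero fun k hk ↦ hc k (by simp at hn; omega)
  have hn! : (n ! : K) ≠ 0 := by exact_mod_cast n.factorial_ne_zero
  rw [eq_div_iff hc0]
  field_simp
  linear_combination (ascPochhammer K n).eval a * x ^ n * mul_ascPochhammer_eval_add_one n c

theorem ascPochhammer_eval_half_sub_mul_four_thirds_pow (m : ℕ) :
    (ascPochhammer K (4 * m + 1)).eval (1 / 2 - m : K) * (4 / 3) ^ (4 * m + 1) / (4 * m + 1)! =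
      (-1) ^ m * 2 ^ (8 * m + 1) * (ascPochhammer K m).eval (1 / 2) *
        (ascPochhammer K (3 * m)).eval (5 / 2) /
        (3 ^ (4 * m + 1) * (ascPochhammer K (4 * m)).eval 3) := by
  have hsplit : (ascPochhammer K (4 * m + 1)).eval (1 / 2 - m : K) =
      (-1) ^ m * (ascPochhammer K m).eval (1 / 2) * (ascPochhammer K (3 * m + 1)).eval (1 / 2) := by
    rw [show 4 * m + 1 = m + (3 * m + 1) by ring, ascPochhammer_eval_add, sub_add_cancel,
      ascPochhammer_eval_half_sub_self]
  have hshift : (ascPochhammer K (3 * m + 1)).eval (1 / 2) * (3 * m + 3 / 2) =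
      3 / 4 * (ascPochhammer K (3 * m)).eval (5 / 2) := by
    have h2 : (ascPochhammer K 2).eval (1 / 2 : K) = 3 / 4 := by
      norm_num [ascPochhammer_succ_eval]
    have h := ascPochhammer_eval_add 2 (3 * m) (1 / 2 : K)
    rw [show 2 + 3 * m = 3 * m + 1 + 1 by ring, ascPochhammer_succ_eval, h2] at h
    norm_num at h
    linear_combination h
  have hfac : 2 * (ascPochhammer K (4 * m)).eval 3 = (4 * m + 1)! * (4 * m + 2) := by
    have h := factorial_mul_ascPochhammer K 2 (4 * m)
    rw [add_comm 2, factorial_succ (4 * m + 1)] at h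
    norm_num at h
    linear_combination h
  have hpow : (4 : K) ^ (4 * m + 1) = 2 * 2 ^ (8 * m + 1) := by
    rw [show (4 : K) = 2 ^ 2 by norm_num, ← pow_mul, ← _root_.pow_succ']
    ring_nf
  have h3 : (ascPochhammer K (4 * m)).eval 3 ≠ 0 := by
    refine right_ne_zero_of_mul (a := (2 : K)) ?_
    rw [hfac]
    exact mul_ne_zero (by exact_mod_cast (4 * m + 1).factorial_ne_zero) (by norm_cast)
  have hF : ((4 * m + 1)! : K) ≠ 0 := by exact_mod_cast (4 * m + 1).factorial_ne_zero
  rw [hsplit, div_pow, hpow]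
  field_simp
  linear_combination (ascPochhammer K m).eval (1 / 2) *
    ((ascPochhammer K (3 * m + 1)).eval (1 / 2) * hfac + 4 / 3 * (4 * m + 1)! * hshift)

end Hypergeometric

/-- Formula (1,4,4-1)(i), case `a = -1/2-m`:
`₂F₁(a, 4a+1; 4a; 4/3) = (-1)^m 2^{8m+1} (1/2)_m (5/2)_{3m} / (3^{4m+1} (3)_{4m})`. -/
theorem case2_half (m : ℕ) :
    ∑ n ∈ Finset.range (4 * m + 1 + 1),
      ((ascPochhammer ℚ n).eval (-1/2 - (m : ℚ)) *
        (ascPochhammer ℚ n).eval (4 * (-1/2 - (m : ℚ)) + 1) /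
        ((ascPochhammer ℚ n).eval (4 * (-1/2 - (m : ℚ))) * (n.factorial : ℚ))) * (4 / 3 : ℚ) ^ n
    = (-1 : ℚ) ^ m * (2 : ℚ) ^ (8 * m + 1) * (ascPochhammer ℚ m).eval (1/2 : ℚ) *
        (ascPochhammer ℚ (3 * m)).eval (5/2 : ℚ) /
        ((3 : ℚ) ^ (4 * m + 1) * (ascPochhammer ℚ (4 * m)).eval (3 : ℚ)) := by
  have hc : ∀ n ≤ 4 * m + 1, 4 * (-1 / 2 - m : ℚ) + n ≠ 0 := by
    intro n hn h
    have : (n : ℚ) = (4 * m + 2 : ℕ) := by push_cast; linarith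
    norm_cast at this
    omega
  rw [sum_hypergeometric_add_one_of_mul_sub_one_eq (by ring) _ hc,
    show (-1 / 2 - m + 1 : ℚ) = 1 / 2 - m by ring]
  exact ascPochhammer_eval_half_sub_mul_four_thirds_pow m
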